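/- Let U ⊆ ℝ² be open, f : U → ℝ³ continuously differentiable, ℓ : ℝ² → ℝ a linear form and c ∈ ℝ, with ϖ(p) = ℓ(p) + c, N ≥ 1 an integer, and γ : U × ℝ → ℝ³ a C¹ map satisfying γ(p, s+1) = γ(p, s) for all (p,s). Let γ̄(p) = ∫₀¹ γ(p,s) ds and F(p) = f(p) + (1/N)·∫₀^{Nϖ(p)} (γ(p,s) − γ̄(p)) ds. Then F is differentiable at every p ∈ U with DF(p) = Df(p) + (γ(p, Nϖ(p)) − γ̄(p)) ⊗ ℓ + (1/N)·∫₀^{Nϖ(p)} (∂_p γ(p,s) − Dγ̄(p)) ds, where (X ⊗ ℓ)(v) = ℓ(v)·X and ∂_p γ denotes the differential of γ in its first variable. Consequently, defining the target differential L(p) = Df(p) + (γ(p, Nϖ(p)) − γ̄(p)) ⊗ ℓ, one has ‖DF(p) − L(p)‖ ≤ (1/N)·∫₀¹ ‖∂_p γ(p,s) − Dγ̄(p)‖ ds for every p ∈ U. -/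

import Mathlib

noncomputable section

abbrev E2 := EuclideanSpace ℝ (Fin 2)
abbrev E3 := EuclideanSpace ℝ (Fin 3)

/-!
Put `Φ(p, t) = ∫₀ᵗ γ(p, s) ds`. Its partial derivatives `∫₀ᵗ ∂ₚγ(p, s) ds` and `γ(p, t)` are
jointly continuous, so `Φ` is differentiable. Since `∫₀^{Nϖ} (γ − γ̄) = Φ(p, Nϖ(p)) − Nϖ(p) γ̄(p)`,
the chain rule along `p ↦ (p, Nϖ(p))` and the product rule produce `(γ(p, Nϖ(p)) − γ̄(p)) ⊗ Nℓ`,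
whose factor `N` cancels the `1/N` in front of the integral. The
remainder is `(1/N) ∫₀^{Nϖ(p)} g` for `g = ∂ₚγ − Dγ̄`, which is `1`-periodic with zero average;
a primitive of such a function is itself periodic, hence bounded by `∫₀¹ ‖g‖`.
-/

open MeasureTheory Set Filter Topology intervalIntegral Function

theorem exists_nhds_bound_of_continuousOn_uncurry {X Y W : Type*} [TopologicalSpace X]
    [LocallyCompactSpace X] [TopologicalSpace Y] [SeminormedAddGroup W] {g : X → Y → W}
    {U : Set X} (hU : IsOpen U) (hg : ContinuousOn (uncurry g) (U ×ˢ univ)) {x₀ : X}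
    (hx₀ : x₀ ∈ U) {S : Set Y} (hS : IsCompact S) :
    ∃ K ∈ 𝓝 x₀, K ⊆ U ∧ ∃ C, ∀ x ∈ K, ∀ y ∈ S, ‖g x y‖ ≤ C := by
  obtain ⟨K, hK, hKU, hKc⟩ := local_compact_nhds (hU.mem_nhds hx₀)
  obtain ⟨C, hC⟩ := (hKc.prod hS).exists_bound_of_continuousOn
    (hg.mono (prod_mono hKU (subset_univ S)))
  exact ⟨K, hK, hKU, C, fun x hx y hy => hC (x, y) ⟨hx, hy⟩⟩

theorem continuousAt_parametric_primitive_of_continuousOn {X W : Type*} [TopologicalSpace X]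
    [FirstCountableTopology X] [LocallyCompactSpace X] [NormedAddCommGroup W] [NormedSpace ℝ W]
    {g : X → ℝ → W} {U : Set X} (hU : IsOpen U) (hg : ContinuousOn (uncurry g) (U ×ˢ univ))
    {x₀ : X} (hx₀ : x₀ ∈ U) (a₀ t₀ : ℝ) :
    ContinuousAt (fun x : X × ℝ => ∫ t in a₀..x.2, g x.1 t) (x₀, t₀) := by
  classical
  set a := min a₀ t₀ - 1
  set b := max a₀ t₀ + 1
  obtain ⟨K, hK, hKU, C, hC⟩ :=
    exists_nhds_bound_of_continuousOn_uncurry hU hg hx₀ (isCompact_uIcc (a := a) (b := b))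
  -- `g x` need not be measurable off `U`, so we work with `g` extended by zero outside `U`.
  let g' : X → ℝ → W := fun x => if x ∈ U then g x else 0
  have hg' : ∀ᶠ x in 𝓝 x₀, g' x = g x := by
    filter_upwards [hU.mem_nhds hx₀] with x hx using if_pos hx
  have hcont : ContinuousAt (fun x : X × ℝ => ∫ t in a₀..x.2, g' x.1 t) (x₀, t₀) := by
    refine continuousAt_parametric_primitive_of_dominated (fun _ => C) a b ?_ ?_
      intervalIntegrable_const ?_ ?_ ?_ Real.volume_singleton
    · intro x
      by_cases hx : x ∈ U
      · simpa [g', hx] using (continuousOn_univ.mp (hg.uncurry_left x hx)).aestronglyMeasurable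
      · simp only [g', hx, if_false]
        exact aestronglyMeasurable_const
    · filter_upwards [hK, hg'] with x hx hx'
      refine ae_restrict_of_forall_mem measurableSet_uIoc fun t ht => ?_
      rw [hx']
      exact hC x hx t (uIoc_subset_uIcc ht)
    · refine ae_of_all _ fun t => ?_
      have : ContinuousAt (fun x => g x t) x₀ :=
        (hg.continuousAt ((hU.prod isOpen_univ).mem_nhds ⟨hx₀, mem_univ t⟩)).comp
          (Continuous.prodMk_left t).continuousAt
      exact this.congr (hg'.mono fun x hx => by simp only [hx])
    · constructor <;> simp [a, b] <;> linarith [le_max_left a₀ t₀, min_le_left a₀ t₀]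
    · constructor <;> simp [a, b] <;> linarith [le_max_right a₀ t₀, min_le_right a₀ t₀]
  refine hcont.congr ?_
  filter_upwards [(continuous_fst.tendsto (x₀, t₀)).eventually hg'] with x hx
  simp only [hx]

section PartialDerivative

variable {E W : Type*} [NormedAddCommGroup E] [NormedSpace ℝ E] [NormedAddCommGroup W]
  [NormedSpace ℝ W] {U : Set E} {φ : E → ℝ → W}

theorem hasFDerivAt_slice_of_contDiffOn (hU : IsOpen U)
    (hφ : ContDiffOn ℝ 1 (uncurry φ) (U ×ˢ univ)) {p : E} (hp : p ∈ U) (s : ℝ) :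
    HasFDerivAt (fun q => φ q s) ((fderiv ℝ (uncurry φ) (p, s)).comp (.inl ℝ E ℝ)) p := by
  have hmem : U ×ˢ univ ∈ 𝓝 (p, s) := (hU.prod isOpen_univ).mem_nhds ⟨hp, mem_univ s⟩
  exact ((hφ.differentiableOn one_ne_zero).differentiableAt hmem).hasFDerivAt.comp p
    (hasFDerivAt_prodMk_left (𝕜 := ℝ) p s)

theorem hasFDerivAt_fderiv_slice_of_contDiffOn (hU : IsOpen U)
    (hφ : ContDiffOn ℝ 1 (uncurry φ) (U ×ˢ univ)) {p : E} (hp : p ∈ U) (s : ℝ) :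
    HasFDerivAt (fun q => φ q s) (fderiv ℝ (fun q => φ q s) p) p :=
  (hasFDerivAt_slice_of_contDiffOn hU hφ hp s).differentiableAt.hasFDerivAt

theorem continuousOn_fderiv_slice_of_contDiffOn (hU : IsOpen U)
    (hφ : ContDiffOn ℝ 1 (uncurry φ) (U ×ˢ univ)) :
    ContinuousOn (uncurry fun p s => fderiv ℝ (fun q => φ q s) p) (U ×ˢ univ) := by
  refine ((hφ.continuousOn_fderiv_of_isOpen (hU.prod isOpen_univ) le_rfl).clm_comp
    (continuousOn_const (c := ContinuousLinearMap.inl ℝ E ℝ))).congr fun x hx => ?_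
  exact (hasFDerivAt_slice_of_contDiffOn hU hφ hx.1 x.2).fderiv

variable [LocallyCompactSpace E]

theorem hasFDerivAt_intervalIntegral_of_contDiffOn (hU : IsOpen U)
    (hφ : ContDiffOn ℝ 1 (uncurry φ) (U ×ˢ univ)) {p₀ : E} (hp₀ : p₀ ∈ U) (a b : ℝ) :
    HasFDerivAt (fun p => ∫ s in a..b, φ p s) (∫ s in a..b, fderiv ℝ (fun q => φ q s) p₀) p₀ := by
  have hφc : ContinuousOn (uncurry φ) (U ×ˢ univ) := hφ.continuousOn
  have hφ'c := continuousOn_fderiv_slice_of_contDiffOn hU hφ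
  obtain ⟨K, hK, hKU, C, hC⟩ :=
    exists_nhds_bound_of_continuousOn_uncurry hU hφ'c hp₀ isCompact_uIcc
  refine hasFDerivAt_integral_of_dominated_of_fderiv_le (F := φ)
    (F' := fun p s => fderiv ℝ (fun q => φ q s) p) (bound := fun _ => C) hK ?_ ?_ ?_ ?_
    intervalIntegrable_const ?_
  · filter_upwards [hU.mem_nhds hp₀] with p hp
    exact (continuousOn_univ.mp (hφc.uncurry_left p hp)).aestronglyMeasurable
  · exact (continuousOn_univ.mp (hφc.uncurry_left p₀ hp₀)).intervalIntegrable a b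
  · exact (continuousOn_univ.mp (hφ'c.uncurry_left p₀ hp₀)).aestronglyMeasurable
  · exact ae_of_all _ fun s hs p hp => hC p hp s (uIoc_subset_uIcc hs)
  · exact ae_of_all _ fun s _ p hp => hasFDerivAt_fderiv_slice_of_contDiffOn hU hφ (hKU hp) s

theorem hasFDerivAt_intervalIntegral_upper_of_contDiffOn [CompleteSpace W] (hU : IsOpen U)
    (hφ : ContDiffOn ℝ 1 (uncurry φ) (U ×ˢ univ)) {p₀ : E} (hp₀ : p₀ ∈ U) (a₀ : ℝ)
    {b : E → ℝ} {b' : E →L[ℝ] ℝ} (hb : HasFDerivAt b b' p₀) :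
    HasFDerivAt (fun p => ∫ s in a₀..b p, φ p s)
      ((∫ s in a₀..b p₀, fderiv ℝ (fun q => φ q s) p₀) + b'.smulRight (φ p₀ (b p₀))) p₀ := by
  have hφc : ContinuousOn (uncurry φ) (U ×ˢ univ) := hφ.continuousOn
  have hU' : ∀ᶠ v : E × ℝ in 𝓝 (p₀, b p₀), v.1 ∈ U :=
    (continuous_fst.tendsto _).eventually (hU.mem_nhds hp₀)
  have hΦ := hasStrictFDerivAt_uncurry_coprod (u := (p₀, b p₀))
    (f := fun p t => ∫ s in a₀..t, φ p s)
    (f₁ := fun p t => ∫ s in a₀..t, fderiv ℝ (fun q => φ q s) p)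
    (f₂ := fun p t => ContinuousLinearMap.toSpanSingleton ℝ (φ p t))
    (hU'.mono fun v hv => hasFDerivAt_intervalIntegral_of_contDiffOn hU hφ hv a₀ v.2)
    (hU'.mono fun v hv => (Continuous.integral_hasStrictDerivAt
      (continuousOn_univ.mp (hφc.uncurry_left v.1 hv)) a₀ v.2).hasDerivAt.hasFDerivAt)
    (continuousAt_parametric_primitive_of_continuousOn hU
        (continuousOn_fderiv_slice_of_contDiffOn hU hφ) hp₀ a₀ (b p₀))
    ((ContinuousLinearMap.toSpanSingletonLIE ℝ W).continuous.continuousAt.comp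
        (hφc.continuousAt ((hU.prod isOpen_univ).mem_nhds ⟨hp₀, mem_univ _⟩)))
  refine (hΦ.hasFDerivAt.comp p₀ ((hasFDerivAt_id p₀).prodMk hb)).congr_fderiv ?_
  ext v
  simp [HasUncurry.uncurry]

theorem hasFDerivAt_intervalIntegral_sub_of_contDiffOn [CompleteSpace W] (hU : IsOpen U)
    (hφ : ContDiffOn ℝ 1 (uncurry φ) (U ×ˢ univ)) {p₀ : E} (hp₀ : p₀ ∈ U) (a₀ : ℝ)
    {ψ : E → W} {ψ' : E →L[ℝ] W} (hψ : HasFDerivAt ψ ψ' p₀)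
    {b : E → ℝ} {b' : E →L[ℝ] ℝ} (hb : HasFDerivAt b b' p₀) :
    HasFDerivAt (fun p => ∫ s in a₀..b p, (φ p s - ψ p))
      (b'.smulRight (φ p₀ (b p₀) - ψ p₀) + ∫ s in a₀..b p₀, (fderiv ℝ (fun q => φ q s) p₀ - ψ'))
      p₀ := by
  have hφc : ContinuousOn (uncurry φ) (U ×ˢ univ) := hφ.continuousOn
  have hφ'c := continuousOn_fderiv_slice_of_contDiffOn hU hφ
  have hsplit : (fun p => (∫ s in a₀..b p, φ p s) - (b p - a₀) • ψ p)
      =ᶠ[𝓝 p₀] fun p => ∫ s in a₀..b p, (φ p s - ψ p) := by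
    filter_upwards [hU.mem_nhds hp₀] with p hp
    rw [integral_sub ((continuousOn_univ.mp (hφc.uncurry_left p hp)).intervalIntegrable _ _)
      intervalIntegrable_const, intervalIntegral.integral_const]
  refine (((hasFDerivAt_intervalIntegral_upper_of_contDiffOn hU hφ hp₀ a₀ hb).sub
    ((hb.sub_const a₀).smul hψ)).congr_of_eventuallyEq hsplit.symm).congr_fderiv ?_
  rw [integral_sub ((continuousOn_univ.mp (hφ'c.uncurry_left p₀ hp₀)).intervalIntegrable _ _)
    intervalIntegrable_const, intervalIntegral.integral_const]
  ext v
  simp only [add_apply, sub_apply, ContinuousLinearMap.smulRight_apply, smul_apply, smul_sub]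
  abel

end PartialDerivative

theorem norm_intervalIntegral_le_of_periodic {W : Type*} [NormedAddCommGroup W] [NormedSpace ℝ W]
    {g : ℝ → W} {T : ℝ} (hT : 0 < T) (hg : ∀ t₁ t₂, IntervalIntegrable g volume t₁ t₂)
    (hper : Periodic g T) (havg : ∫ s in 0..T, g s = 0) (t : ℝ) :
    ‖∫ s in 0..t, g s‖ ≤ ∫ s in 0..T, ‖g s‖ := by
  have hprim : Periodic (fun t => ∫ s in 0..t, g s) T := fun t => by
    simp only [hper.intervalIntegral_add_eq_add 0 t hg, zero_add, havg, add_zero]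
  obtain ⟨u, ⟨hu₀, huT⟩, hu⟩ := hprim.exists_mem_Ico₀ hT t
  rw [hu]
  calc ‖∫ s in 0..u, g s‖ ≤ ∫ s in 0..u, ‖g s‖ := norm_integral_le_integral_norm hu₀
    _ ≤ ∫ s in 0..T, ‖g s‖ :=
      integral_mono_interval le_rfl hu₀ huT.le (ae_of_all _ fun s => norm_nonneg _)
        (hg 0 T).norm

theorem stmt7 (U : Set E2) (hU : IsOpen U)
    (f : E2 → E3) (hf : ContDiffOn ℝ 1 f U)
    (ℓ : E2 →L[ℝ] ℝ) (c : ℝ) (ϖ : E2 → ℝ) (hϖ : ∀ p : E2, ϖ p = ℓ p + c)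
    (N : ℕ) (hN : 1 ≤ N)
    (γ : E2 → ℝ → E3)
    (hγ : ContDiffOn ℝ 1 (fun q : E2 × ℝ => γ q.1 q.2) (U ×ˢ (Set.univ : Set ℝ)))
    (hper : ∀ (p : E2) (s : ℝ), γ p (s + 1) = γ p s)
    (γbar : E2 → E3) (hγbar : ∀ p : E2, γbar p = ∫ s in (0:ℝ)..1, γ p s)
    (F : E2 → E3)
    (hF : ∀ p : E2,
      F p = f p + (N : ℝ)⁻¹ • ∫ s in (0:ℝ)..((N : ℝ) * ϖ p), (γ p s - γbar p)) :
    ∀ p ∈ U,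
      HasFDerivAt F
        (fderiv ℝ f p + ℓ.smulRight (γ p ((N : ℝ) * ϖ p) - γbar p)
          + (N : ℝ)⁻¹ • ∫ s in (0:ℝ)..((N : ℝ) * ϖ p),
              (fderiv ℝ (fun q => γ q s) p - fderiv ℝ γbar p)) p ∧
      ‖fderiv ℝ F p - (fderiv ℝ f p + ℓ.smulRight (γ p ((N : ℝ) * ϖ p) - γbar p))‖
        ≤ (N : ℝ)⁻¹ * ∫ s in (0:ℝ)..1, ‖fderiv ℝ (fun q => γ q s) p - fderiv ℝ γbar p‖ := by
  intro p₀ hp₀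
  have hN₀ : (N : ℝ) ≠ 0 := Nat.cast_ne_zero.mpr (by omega)
  have hγbar' : HasFDerivAt γbar (∫ s in (0:ℝ)..1, fderiv ℝ (fun q => γ q s) p₀) p₀ := by
    simpa only [← funext hγbar] using hasFDerivAt_intervalIntegral_of_contDiffOn hU hγ hp₀ 0 1
  have hϖ' : HasFDerivAt (fun p => (N : ℝ) * ϖ p) ((N : ℝ) • ℓ) p₀ := by
    simpa only [hϖ] using (ℓ.hasFDerivAt.add_const c).const_mul (N : ℝ)
  have hf' := ((hf.differentiableOn one_ne_zero).differentiableAt (hU.mem_nhds hp₀)).hasFDerivAt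
  have hFd := (hf'.add ((hasFDerivAt_intervalIntegral_sub_of_contDiffOn hU hγ hp₀ 0
    hγbar'.differentiableAt.hasFDerivAt hϖ').const_smul (N : ℝ)⁻¹)).congr_of_eventuallyEq
    (Eventually.of_forall hF)
  set X := γ p₀ ((N : ℝ) * ϖ p₀) - γbar p₀
  set I := ∫ s in (0:ℝ)..((N : ℝ) * ϖ p₀), (fderiv ℝ (fun q => γ q s) p₀ - fderiv ℝ γbar p₀)
  have hderiv : HasFDerivAt F (fderiv ℝ f p₀ + ℓ.smulRight X + (N : ℝ)⁻¹ • I) p₀ := by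
    refine hFd.congr_fderiv ?_
    ext v : 1
    simp [smul_smul, hN₀, add_assoc]
  refine ⟨hderiv, ?_⟩
  have hslice : Continuous fun s => fderiv ℝ (fun q => γ q s) p₀ :=
    continuousOn_univ.mp ((continuousOn_fderiv_slice_of_contDiffOn hU hγ).uncurry_left p₀ hp₀)
  have havg : ∫ s in (0:ℝ)..1, (fderiv ℝ (fun q => γ q s) p₀ - fderiv ℝ γbar p₀) = 0 := by
    rw [integral_sub (hslice.intervalIntegrable 0 1) intervalIntegrable_const,
      intervalIntegral.integral_const, hγbar'.fderiv, sub_zero, one_smul, sub_self]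
  have hperiodic : Periodic (fun s => fderiv ℝ (fun q => γ q s) p₀ - fderiv ℝ γbar p₀) 1 :=
    fun s => by simp only [hper]
  rw [hderiv.fderiv, add_sub_cancel_left, norm_smul, norm_inv, Real.norm_natCast]
  gcongr
  exact norm_intervalIntegral_le_of_periodic one_pos
    (fun _ _ => (hslice.sub continuous_const).intervalIntegrable _ _) hperiodic havg _
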